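/- Let G be a finite group with Φ(G) = 1 and let N be a normal subgroup of G contained in F*(G). Then N = F(N) × E(N), and moreover F(N) = Z(N). -/

import Mathlib

open Subgroup

/-- A subgroup `H` of `G` is subnormal if there is a chain of subgroups from `H` to `G`,
each normal in the next. -/
def IsSubnormal {G : Type*} [Group G] (H : Subgroup G) : Prop :=
  ∃ (n : ℕ) (c : ℕ → Subgroup G), c 0 = H ∧ c n = ⊤ ∧
    ∀ i, c i ≤ c (i + 1) ∧ ((c i).subgroupOf (c (i + 1))).Normal

/-- A group is quasi-simple if it is perfect and its central quotient is simple. -/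
def IsQuasiSimple (Q : Type*) [Group Q] : Prop :=
  commutator Q = ⊤ ∧ IsSimpleGroup (Q ⧸ Subgroup.center Q)

/-- A component of `G` is a subnormal quasi-simple subgroup. -/
def IsComponent {G : Type*} [Group G] (Q : Subgroup G) : Prop :=
  _root_.IsSubnormal Q ∧ IsQuasiSimple Q

/-- The layer `E(G)`: the subgroup generated by all components of `G`. -/
def layer (G : Type*) [Group G] : Subgroup G :=
  Subgroup.closure {x | ∃ Q : Subgroup G, IsComponent Q ∧ x ∈ Q}

/-- The Fitting subgroup `F(G)`: the subgroup generated by all nilpotent normal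
subgroups of `G`. -/
def fitting (G : Type*) [Group G] : Subgroup G :=
  Subgroup.normalClosure {x | ∃ N : Subgroup G, N.Normal ∧ Group.IsNilpotent N ∧ x ∈ N}

/-- The generalised Fitting subgroup `F*(G) = F(G) E(G)`. -/
def genFitting (G : Type*) [Group G] : Subgroup G := fitting G ⊔ layer G

/-- `N` is a minimal normal subgroup of `G`. -/
def IsMinimalNormal {G : Type*} [Group G] (N : Subgroup G) : Prop :=
  N.Normal ∧ N ≠ ⊥ ∧ ∀ M : Subgroup G, M.Normal → M ≤ N → M ≠ ⊥ → M = N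

/-- The socle of `G`: the subgroup generated by all minimal normal subgroups of `G`. -/
def socle (G : Type*) [Group G] : Subgroup G :=
  Subgroup.closure {x | ∃ N : Subgroup G, IsMinimalNormal N ∧ x ∈ N}

/-- `Soc(Z(G))`, viewed as a subgroup of `G`. -/
def centerSocle (G : Type*) [Group G] : Subgroup G :=
  (socle (Subgroup.center G)).map (Subgroup.center G).subtype

/-- The class `B` of groups all of whose quotients have trivial Frattini subgroup. -/
def classB (G : Type*) [Group G] : Prop :=
  ∀ (N : Subgroup G) [N.Normal], frattini (G ⧸ N) = ⊥

/-!
For `N ⊴ G` with `G` finite, a maximal subgroup `M` of `G` with `Φ(N) ≰ M` gives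
`N = (M ∩ N) Φ(N)`, hence `N ≤ M`; so `Φ(N) ≤ Φ(G) = 1`. Hence a nilpotent normal subgroup `M`
is abelian (`M' ≤ Φ(M) = 1`), and so is the product of two abelian normal subgroups `A`, `B`:
there `(AB)' ≤ A ∩ B ≤ Z(AB)`, and a central commutator lies in every maximal subgroup.
Thus `F(G)` is abelian.

A component `L` either lies in a normal subgroup `M` or centralizes it: inductively along a
subnormal series, `[L, M]` is centralized by `L`, so `[L, L, M] = 1` by the three subgroups lemma,
and `L` is perfect. Therefore `E(G)`, and with it `F*(G)`, centralizes `F(G)`. A component of `G`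
not inside `N` centralizes `N`, one inside `N` is a component of `N`, so `N = Z(N) E(N)`. The same
facts inside `N` give `[F(N), E(N)] = 1`, hence `F(N) = Z(N)`, and
`F(N) ∩ E(N) ≤ Z(N) ∩ N' ≤ Φ(N) = 1`.
-/

section Subnormal

variable {G : Type*} [Group G]

theorem isSubnormal_iff_subgroup_isSubnormal {H : Subgroup G} :
    _root_.IsSubnormal H ↔ H.IsSubnormal := by
  rw [IsSubnormal.isSubnormal_iff]
  constructor
  · rintro ⟨n, c, h0, hn, hc⟩
    exact ⟨n, c, monotone_nat_of_le_succ fun i => (hc i).1, fun i => (hc i).2, h0, hn⟩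
  · rintro ⟨n, c, hmono, hc, h0, hn⟩
    exact ⟨n, c, h0, hn, fun i => ⟨hmono i.le_succ, hc i⟩⟩

theorem IsQuasiSimple.of_mulEquiv {Q R : Type*} [Group Q] [Group R] (e : Q ≃* R)
    (hQ : IsQuasiSimple Q) : IsQuasiSimple R := by
  obtain ⟨hperf, hsimple⟩ := hQ
  have hcenter : (center Q).map e.toMonoidHom = center R := by
    ext y
    rw [mem_map_equiv, mem_center_iff, mem_center_iff]
    exact ⟨fun h g => e.symm.injective (by simpa using h (e.symm g)),
      fun h g => by simpa using congrArg e.symm (h (e g))⟩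
  refine ⟨?_, (QuotientGroup.congr _ _ e hcenter).symm.isSimpleGroup⟩
  have := map_commutator_eq Q e.toMonoidHom
  rwa [hperf, ← MonoidHom.range_eq_map, MonoidHom.range_eq_top.2 e.surjective,
    ← _root_.commutator_def, eq_comm] at this

theorem IsComponent.subgroupOf {Q K : Subgroup G} (hQ : IsComponent Q) (hQK : Q ≤ K) :
    IsComponent (Q.subgroupOf K) :=
  ⟨isSubnormal_iff_subgroup_isSubnormal.2 (isSubnormal_iff_subgroup_isSubnormal.1 hQ.1).subgroupOf,
    hQ.2.of_mulEquiv (subgroupOfEquivOfLe hQK).symm⟩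

end Subnormal

section QuasiSimple

variable {G : Type*} [Group G]

theorem commutator_self_eq_self_of_commutator_eq_top {H : Subgroup G} (h : commutator H = ⊤) :
    ⁅H, H⁆ = H := by
  have := map_commutator_eq H H.subtype
  rwa [h, range_subtype, ← MonoidHom.range_eq_map, range_subtype, eq_comm] at this

theorem IsQuasiSimple.eq_top_or_le_center {Q : Type*} [Group Q] (hQ : IsQuasiSimple Q)
    (M : Subgroup Q) [M.Normal] : M = ⊤ ∨ M ≤ center Q := by
  have := hQ.2
  let π := QuotientGroup.mk' (center Q)
  rcases (Normal.map ‹_› π (QuotientGroup.mk'_surjective _)).eq_bot_or_eq_top with h | h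
  · right
    rwa [Subgroup.map_eq_bot_iff, QuotientGroup.ker_mk'] at h
  · left
    have hsup : M ⊔ center Q = ⊤ := by
      rw [← QuotientGroup.ker_mk' (center Q), ← comap_map_eq, h, comap_top]
    rw [eq_top_iff, ← hQ.1]
    exact Normal.commutator_le_of_self_sup_commutative_eq_top hsup inferInstance

theorem IsQuasiSimple.le_or_le_centralizer_of_chain {L : Subgroup G} (hL : IsQuasiSimple L)
    {c : ℕ → Subgroup G} (hc0 : c 0 = L)
    (hc : ∀ i, c i ≤ c (i + 1) ∧ ((c i).subgroupOf (c (i + 1))).Normal) (n : ℕ) :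
    ∀ M : Subgroup G, M ≤ c n → c n ≤ normalizer (M : Set G) → L ≤ M ∨ L ≤ centralizer M := by
  induction n with
  | zero =>
    intro M hML hLM
    rw [hc0] at hML hLM
    have : (M.subgroupOf L).Normal := (normal_subgroupOf_iff_le_normalizer hML).2 hLM
    rcases hL.eq_top_or_le_center (M.subgroupOf L) with h | h
    · exact .inl (subgroupOf_eq_top.1 h)
    · refine .inr fun x hx => mem_centralizer_iff.2 fun y hy => ?_
      have hy' : (⟨y, hML hy⟩ : L) ∈ M.subgroupOf L := hy
      exact congrArg Subtype.val (mem_center_iff.1 (h hy') ⟨x, hx⟩).symm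
  | succ n ih =>
    intro M hM hnorm
    have hLn : L ≤ c n := hc0 ▸ monotone_nat_of_le_succ (fun i => (hc i).1) n.zero_le
    have hn : c (n + 1) ≤ normalizer (c n : Set G) :=
      (normal_subgroupOf_iff_le_normalizer (hc n).1).1 (hc n).2
    rcases ih (M ⊓ c n) inf_le_right
      ((le_inf ((hc n).1.trans hnorm) le_normalizer).trans inf_normalizer_le_normalizer_inf)
      with h | h
    · exact .inl (h.trans inf_le_left)
    · right
      have hLM : ⁅L, M⁆ ≤ M ⊓ c n := le_inf
        (le_normalizer_iff_commutator_le_right.1 (hLn.trans ((hc n).1.trans hnorm)))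
        ((commutator_mono hLn le_rfl).trans
          (le_normalizer_iff_commutator_le_left.1 (hM.trans hn)))
      have h1 : ⁅⁅L, M⁆, L⁆ = ⊥ :=
        commutator_eq_bot_iff_le_centralizer.2 (hLM.trans (le_centralizer_iff.1 h))
      have h2 : ⁅⁅M, L⁆, L⁆ = ⊥ := by rwa [commutator_comm M L]
      have := commutator_commutator_eq_bot_of_rotate h1 h2
      rwa [commutator_self_eq_self_of_commutator_eq_top hL.1,
        commutator_eq_bot_iff_le_centralizer] at this

theorem IsComponent.le_or_le_centralizer {L M : Subgroup G} (hL : IsComponent L) (hM : M.Normal) :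
    L ≤ M ∨ L ≤ centralizer M := by
  obtain ⟨⟨n, c, hc0, hcn, hc⟩, hQS⟩ := hL
  exact hQS.le_or_le_centralizer_of_chain hc0 hc n M (hcn ▸ le_top)
    (hcn ▸ (normalizer_eq_top_iff.2 hM).ge)

theorem layer_le_centralizer {M : Subgroup G} (hM : M.Normal) (hA : M ≤ centralizer M) :
    layer G ≤ centralizer M :=
  (closure_le _).2 fun _ ⟨_, hL, hx⟩ =>
    (hL.le_or_le_centralizer hM).elim (fun h => hA (h hx)) (fun h => h hx)

theorem layer_le_commutator : layer G ≤ commutator G :=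
  (closure_le _).2 fun _ ⟨_, hL, hx⟩ => by
    rw [← commutator_self_eq_self_of_commutator_eq_top hL.2.1] at hx
    exact commutator_mono le_top le_top hx

end QuasiSimple

section Frattini

variable {G : Type*} [Group G]

theorem le_frattini_iff {H : Subgroup G} : H ≤ frattini G ↔ ∀ M, IsCoatom M → H ≤ M :=
  ⟨fun h _ hM => h.trans (frattini_le_coatom hM), fun h => le_iInf₂ h⟩

theorem commutator_le_of_isCoatom {M : Subgroup G} [M.Normal] (hM : IsCoatom M) :
    commutator G ≤ M := by
  obtain ⟨g, hg⟩ := SetLike.exists_not_mem_of_ne_top M hM.1 rfl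
  exact Normal.commutator_le_of_self_sup_commutative_eq_top
    (hM.2 _ (left_lt_sup.2 fun h => hg (h (mem_zpowers g)))) inferInstance

theorem center_inf_commutator_le_frattini : center G ⊓ commutator G ≤ frattini G := by
  refine le_frattini_iff.2 fun M hM => ?_
  rintro z ⟨hz, hz'⟩
  by_contra hzM
  have htop : M ⊔ zpowers z = ⊤ := hM.2 _ (left_lt_sup.2 fun h => hzM (h (mem_zpowers z)))
  have hzM' : z ∈ normalizer (M : Set G) :=
    (center_le_centralizer _).trans (centralizer_le_normalizer _) hz
  have : M.Normal := normalizer_eq_top_iff.1 <| top_le_iff.1 <|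
    htop ▸ sup_le le_normalizer (zpowers_le.2 hzM')
  exact hzM (commutator_le_of_isCoatom hM hz')

theorem commutator_le_frattini [Group.IsNilpotent G] : commutator G ≤ frattini G :=
  le_frattini_iff.2 fun _ hM =>
    have := Group.normalizerCondition_of_isNilpotent.normal_of_coatom _ hM
    commutator_le_of_isCoatom hM

theorem map_subtype_frattini_le [Finite G] (N : Subgroup G) [N.Normal] :
    (frattini N).map N.subtype ≤ frattini G := by
  refine le_frattini_iff.2 fun M hM => ?_
  by_contra hPM
  set P := (frattini N).map N.subtype
  have htop : M ⊔ P = ⊤ := hM.2 _ (left_lt_sup.2 hPM)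
  have hN : M.subgroupOf N ⊔ frattini N = ⊤ := by
    refine eq_top_iff.2 fun ⟨y, hy⟩ _ => ?_
    obtain ⟨m, hm, p, ⟨p', hp', rfl⟩, rfl⟩ := mem_sup_of_normal_right.1 (htop ▸ mem_top y)
    have hmN : m ∈ N := (mul_mem_cancel_right p'.2).1 hy
    exact mul_mem_sup (x := ⟨m, hmN⟩) (mem_subgroupOf.2 hm) hp'
  exact hPM ((map_subtype_le _).trans (subgroupOf_eq_top.1 (frattini_nongenerating hN)))

theorem frattini_eq_bot_of_normal [Finite G] (hG : frattini G = ⊥) (N : Subgroup G) [N.Normal] :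
    frattini N = ⊥ :=
  (map_eq_bot_iff_of_injective _ N.subtype_injective).1
    (le_bot_iff.1 (hG ▸ map_subtype_frattini_le N))

end Frattini

section Abelian

variable {G : Type*} [Group G]

theorem isMulCommutative_of_sup_eq_top (hΦ : frattini G = ⊥) {A B : Subgroup G} [A.Normal]
    [B.Normal] [IsMulCommutative A] [IsMulCommutative B] (h : A ⊔ B = ⊤) :
    IsMulCommutative G := by
  have hcenter : ((A ⊓ B : Subgroup G) : Set G) ⊆ center G :=
    centralizer_eq_top_iff_subset.1 <| top_le_iff.1 <| h ▸ sup_le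
      ((le_centralizer A).trans (centralizer_le inf_le_left))
      ((le_centralizer B).trans (centralizer_le inf_le_right))
  have hcomm : commutator G ≤ A ⊓ B := le_inf
    (Normal.commutator_le_of_self_sup_commutative_eq_top h inferInstance)
    (Normal.commutator_le_of_self_sup_commutative_eq_top (sup_comm A B ▸ h) inferInstance)
  rw [← commutator_eq_bot_iff, eq_bot_iff, ← hΦ]
  exact (le_inf (hcomm.trans hcenter) le_rfl).trans center_inf_commutator_le_frattini

variable [Finite G]

theorem isMulCommutative_of_isNilpotent (hG : frattini G = ⊥) (M : Subgroup G) [M.Normal]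
    [Group.IsNilpotent M] : IsMulCommutative M :=
  (commutator_eq_bot_iff M).1 <| le_bot_iff.1 <|
    frattini_eq_bot_of_normal hG M ▸ commutator_le_frattini

theorem isMulCommutative_sup (hG : frattini G = ⊥) {A B : Subgroup G} [A.Normal] [B.Normal]
    [IsMulCommutative A] [IsMulCommutative B] : IsMulCommutative (A ⊔ B : Subgroup G) :=
  isMulCommutative_of_sup_eq_top (frattini_eq_bot_of_normal hG _)
    (A := A.subgroupOf (A ⊔ B)) (B := B.subgroupOf (A ⊔ B))
    (by rw [← subgroupOf_sup le_sup_left le_sup_right, subgroupOf_self])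

theorem isMulCommutative_fitting (hG : frattini G = ⊥) : IsMulCommutative (fitting G) := by
  let D := {A : Subgroup G | A.Normal ∧ IsMulCommutative A}
  have hdir : DirectedOn (· ≤ ·) D := fun A ⟨_, _⟩ B ⟨_, _⟩ =>
    ⟨A ⊔ B, ⟨inferInstance, isMulCommutative_sup hG⟩, le_sup_left, le_sup_right⟩
  have : Nonempty D := ⟨⊥, inferInstance, inferInstance⟩
  have hD : IsMulCommutative (sSup D : Subgroup G) := by
    rw [sSup_eq_iSup']
    exact isMulCommutative_iSup (hS := fun A => A.2.2) hdir.directed_val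
  have : (sSup D : Subgroup G).Normal := sSup_normal D fun A hA => hA.1
  have hle : fitting G ≤ sSup D := normalClosure_le_normal fun x ⟨M, hM, hMnil, hx⟩ =>
    le_sSup (show M ∈ D from ⟨hM, isMulCommutative_of_isNilpotent hG M⟩) hx
  exact le_centralizer_iff_isMulCommutative.1
    (hle.trans ((le_centralizer _).trans (centralizer_le hle)))

end Abelian

section Decomposition

variable {G : Type*} [Group G]

theorem le_fitting {M : Subgroup G} (hM : M.Normal) [Group.IsNilpotent M] : M ≤ fitting G :=
  fun x hx => subset_normalClosure ⟨M, hM, ‹_›, hx⟩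

theorem layer_le_centralizer_sup_map_layer {N : Subgroup G} (hN : N.Normal) :
    layer G ≤ centralizer N ⊔ (layer N).map N.subtype :=
  (closure_le _).2 fun x ⟨_, hQ, hx⟩ => (hQ.le_or_le_centralizer hN).elim
    (fun hQN => mem_sup_right ⟨⟨x, hQN hx⟩, subset_closure ⟨_, hQ.subgroupOf hQN, hx⟩, rfl⟩)
    (fun h => mem_sup_left (h hx))

variable [Finite G]

theorem fitting_le_centralizer_layer (hG : frattini G = ⊥) : fitting G ≤ centralizer (layer G) :=
  have := isMulCommutative_fitting hG
  le_centralizer_iff.1 (layer_le_centralizer normalClosure_normal (le_centralizer _))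

theorem genFitting_le_centralizer_fitting (hG : frattini G = ⊥) :
    genFitting G ≤ centralizer (fitting G) :=
  have := isMulCommutative_fitting hG
  sup_le (le_centralizer _) (le_centralizer_iff.1 (fitting_le_centralizer_layer hG))

theorem center_sup_layer_eq_top (hG : frattini G = ⊥) {N : Subgroup G} (hN : N.Normal)
    (hle : N ≤ genFitting G) : center N ⊔ layer N = ⊤ := by
  have hF : genFitting G ≤ centralizer N ⊔ (layer N).map N.subtype := sup_le
    (le_sup_of_le_left (le_centralizer_iff.1 (hle.trans (genFitting_le_centralizer_fitting hG))))
    (layer_le_centralizer_sup_map_layer hN)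
  refine eq_top_iff.2 fun ⟨n, hn⟩ _ => ?_
  obtain ⟨c, hc, _, ⟨e, he, rfl⟩, rfl⟩ := mem_sup_of_normal_left.1 (hF (hle hn))
  have hcN : c ∈ N := (mul_mem_cancel_right e.2).1 hn
  refine mul_mem_sup (x := ⟨c, hcN⟩) (mem_center_iff.2 fun g => ?_) he
  exact Subtype.ext (mem_centralizer_iff.1 hc g g.2)

open scoped IsMulCommutative in
theorem fitting_eq_center_of_center_sup_layer_eq_top (hG : frattini G = ⊥)
    (h : center G ⊔ layer G = ⊤) : fitting G = center G := by
  refine le_antisymm ?_ (le_fitting inferInstance)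
  rw [← centralizer_univ, ← coe_top, ← h]
  exact le_centralizer_iff.2
    (sup_le (center_le_centralizer _) (le_centralizer_iff.1 (fitting_le_centralizer_layer hG)))

end Decomposition

/-- If `Φ(G) = 1` and `N ⊴ G` with `N ≤ F*(G)`, then `N = F(N) × E(N)` and
`F(N) = Z(N)`. -/
theorem stmt_9 (G : Type*) [Group G] [Finite G] (hG : frattini G = ⊥)
    (N : Subgroup G) (hN : N.Normal) (hle : N ≤ genFitting G) :
    fitting N ⊔ layer N = ⊤ ∧ fitting N ⊓ layer N = ⊥ ∧
      (∀ x ∈ fitting N, ∀ y ∈ layer N, Commute x y) ∧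
      fitting N = Subgroup.center N := by
  have hΦ : frattini N = ⊥ := frattini_eq_bot_of_normal hG N
  have htop := center_sup_layer_eq_top hG hN hle
  have hZ := fitting_eq_center_of_center_sup_layer_eq_top hΦ htop
  refine ⟨hZ ▸ htop, ?_, fun x hx y hy =>
    (mem_centralizer_iff.1 (fitting_le_centralizer_layer hΦ hx) y hy).symm, hZ⟩
  rw [eq_bot_iff, ← hΦ, hZ]
  exact (inf_le_inf_left _ layer_le_commutator).trans center_inf_commutator_le_frattini
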